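/- arXiv:2510.19930 — 5 statements merged into one kernel-verified Lean document; each statement's English description precedes it below -/
import Mathlib

section
/- An ideal n-gon in the hyperbolic plane with n odd admits exactly one immersed horogon. -/
/-- An (immersed) horogon in an ideal `n`-gon, in the upper half-plane model.
The ideal vertices are `n` points `v 0 < v 1 < ⋯ < v (n-1)` on the real line (every
ideal polygon is isometric to one in this form), and a horocycle based at the finite
ideal point `v i` is recorded by its Euclidean diameter `s i > 0`.  Two horocycles
of diameters `s, t` based at distinct real points `ξ, η` are tangent to each other
exactly when `(ξ − η)² = s·t`, so a horogon is a choice of positive diameters making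
the horocycles at the two endpoints of each side of the polygon mutually tangent. -/
def IsHorogon (n : ℕ) [NeZero n] (v : Fin n → ℝ) (s : Fin n → ℝ) : Prop :=
  (∀ i, 0 < s i) ∧ ∀ i : Fin n, (v i - v (i + 1)) ^ 2 = s i * s (i + 1)

open Fin.NatCast Fin.CommRing

/-- An ideal `n`-gon in the hyperbolic plane with `n` odd admits
exactly one immersed horogon. -/
theorem stmt5 (n : ℕ) [NeZero n] (hodd : Odd n) (h3 : 3 ≤ n)
    (v : Fin n → ℝ) (hv : StrictMono v) :
    ∃! s : Fin n → ℝ, IsHorogon n v s := by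
  have hone : (1 : Fin n) ≠ 0 := by
    have hval : (1 : Fin n).val = 1 := by rw [Fin.val_one']; exact Nat.mod_eq_of_lt (by omega)
    intro h
    rw [h] at hval
    simp at hval
  have hd : ∀ i : Fin n, 0 < (v i - v (i + 1)) ^ 2 := by
    intro i
    have hne : i ≠ i + 1 := by
      intro h
      exact hone (left_eq_add.mp h)
    have hvne : v i ≠ v (i + 1) := fun h => hne (hv.injective h)
    have h0 : v i - v (i + 1) ≠ 0 := sub_ne_zero.mpr hvne
    positivity
  set d : Fin n → ℝ := fun i => (v i - v (i + 1)) ^ 2 with hdd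
  set e : Fin n → ℝ := fun i => Real.log (d i) with he
  set t : Fin n → ℝ := fun i => (∑ k ∈ Finset.range n, (-1 : ℝ) ^ k * e (i + (k : Fin n))) / 2
    with ht
  -- key identity
  have key : ∀ i : Fin n, t i + t (i + 1) = e i := by
    intro i
    have hS : (∑ k ∈ Finset.range n, (-1 : ℝ) ^ k * e (i + 1 + (k : Fin n)))
        = -(∑ k ∈ Finset.range n, (-1 : ℝ) ^ k * e (i + (k : Fin n))) + 2 * e i := by
      have h1 : ∀ k : ℕ, (-1 : ℝ) ^ k * e (i + 1 + (k : Fin n))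
          = -((-1 : ℝ) ^ (k + 1) * e (i + ((k + 1 : ℕ) : Fin n))) := by
        intro k
        have : i + 1 + (k : Fin n) = i + ((k + 1 : ℕ) : Fin n) := by
          push_cast
          ring
        rw [this, pow_succ]
        ring
      calc (∑ k ∈ Finset.range n, (-1 : ℝ) ^ k * e (i + 1 + (k : Fin n)))
          = ∑ k ∈ Finset.range n, -((-1 : ℝ) ^ (k + 1) * e (i + ((k + 1 : ℕ) : Fin n))) := by
            exact Finset.sum_congr rfl fun k _ => h1 k
        _ = -(∑ k ∈ Finset.range n, (-1 : ℝ) ^ (k + 1) * e (i + ((k + 1 : ℕ) : Fin n))) := by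
            rw [Finset.sum_neg_distrib]
        _ = -((∑ k ∈ Finset.range (n + 1), (-1 : ℝ) ^ k * e (i + (k : Fin n)))
              - (-1 : ℝ) ^ 0 * e (i + ((0 : ℕ) : Fin n))) := by
            rw [Finset.sum_range_succ']
            ring
        _ = -(∑ k ∈ Finset.range n, (-1 : ℝ) ^ k * e (i + (k : Fin n))) + 2 * e i := by
            rw [Finset.sum_range_succ]
            have h2 : ((n : ℕ) : Fin n) = 0 := Fin.natCast_self n
            have h3' : (-1 : ℝ) ^ n = -1 := hodd.neg_one_pow
            simp [h2, h3']
            ring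
    rw [ht]
    simp only
    rw [← add_div]
    rw [hS]
    ring
  set s : Fin n → ℝ := fun i => Real.exp (t i) with hs
  have hhoro : IsHorogon n v s := by
    constructor
    · intro i; exact Real.exp_pos _
    · intro i
      have : s i * s (i + 1) = Real.exp (t i + t (i + 1)) := (Real.exp_add _ _).symm
      rw [this, key i, he]
      simp only
      rw [Real.exp_log (hd i)]
  refine ⟨s, hhoro, ?_⟩
  intro s' ⟨hpos', heq'⟩
  -- f i := log (s' i) - t i satisfies f (i+1) = - f i
  set f : Fin n → ℝ := fun i => Real.log (s' i) - t i with hf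
  have hstep : ∀ i : Fin n, f (i + 1) = -f i := by
    intro i
    have h1 : Real.log (s' i) + Real.log (s' (i + 1)) = e i := by
      rw [← Real.log_mul (ne_of_gt (hpos' i)) (ne_of_gt (hpos' (i + 1))), he]
      simp only
      rw [hdd]
      simp only
      rw [heq' i]
    have h2 := key i
    rw [hf]
    simp only
    linarith
  have hiter : ∀ (k : ℕ) (i : Fin n), f (i + (k : Fin n)) = (-1 : ℝ) ^ k * f i := by
    intro k
    induction k with
    | zero => intro i; simp
    | succ m ih =>
      intro i
      have : i + ((m + 1 : ℕ) : Fin n) = (i + (m : Fin n)) + 1 := by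
        push_cast; ring
      rw [this, hstep, ih, pow_succ]
      ring
  have hf0 : f 0 = 0 := by
    have := hiter n 0
    rw [Fin.natCast_self, add_zero, hodd.neg_one_pow] at this
    linarith
  have hfall : ∀ i : Fin n, f i = 0 := by
    intro i
    have := hiter i.val 0
    rw [Fin.cast_val_eq_self, zero_add] at this
    rw [this, hf0, mul_zero]
  funext i
  have : Real.log (s' i) = t i := by have := hfall i; rw [hf] at this; simp only at this; linarith
  have := congrArg Real.exp this
  rwa [Real.exp_log (hpos' i)] at this
end

section
/- An ideal n-gon in the hyperbolic plane with n even admits an immersed horogon if and only if its metric residue is zero; in that case it admits a one-parameter family of immersed horogons. -/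
/-- The metric residue of an ideal `n`-gon (`n` even) with vertices
`v 0 < ⋯ < v (n-1)` on the real line: truncating the spikes by horocycles of
diameters `s i`, the truncated side from `v i` to `v (i+1)` has signed hyperbolic
length `log((v i − v (i+1))²/(s i · s (i+1)))`; for `n` even the alternating sum is
independent of the truncation and equals `Σ (−1)^i log((v i − v (i+1))²)`. -/
noncomputable def polygonResidue (n : ℕ) [NeZero n] (v : Fin n → ℝ) : ℝ :=
  ∑ i : Fin n, (-1 : ℝ) ^ (i : ℕ) * Real.log ((v i - v (i + 1)) ^ 2)

section aux

open Fin.NatCast in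
/-- Log of the squared side length, indexed by `ℕ` via the mod-`n` cast. -/
noncomputable def Lfun (n : ℕ) [NeZero n] (v : Fin n → ℝ) : ℕ → ℝ :=
  fun j => Real.log ((v (j : Fin n) - v ((j : Fin n) + 1)) ^ 2)

/-- Particular solution of the tangency recursion. -/
noncomputable def ufun (n : ℕ) [NeZero n] (v : Fin n → ℝ) : ℕ → ℝ :=
  fun k => ∑ j ∈ Finset.range k, (-1 : ℝ) ^ (k + j + 1) * Lfun n v j

lemma neg_one_pow_mod (n k : ℕ) (h : 2 ∣ n) : ((-1 : ℝ)) ^ (k % n) = (-1) ^ k := by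
  rw [neg_one_pow_eq_pow_mod_two, Nat.mod_mod_of_dvd _ h, ← neg_one_pow_eq_pow_mod_two]

lemma ufun_succ (n : ℕ) [NeZero n] (v : Fin n → ℝ) (k : ℕ) :
    ufun n v (k + 1) = Lfun n v k - ufun n v k := by
  unfold ufun
  rw [Finset.sum_range_succ]
  have h1 : ((-1 : ℝ)) ^ (k + 1 + k + 1) = 1 := by
    have h : k + 1 + k + 1 = 2 * (k + 1) := by ring
    rw [h, pow_mul]; norm_num
  have h2 : ∀ j ∈ Finset.range k, ((-1 : ℝ)) ^ (k + 1 + j + 1) * Lfun n v j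
      = -(((-1 : ℝ)) ^ (k + j + 1) * Lfun n v j) := by
    intro j _
    have h : k + 1 + j + 1 = (k + j + 1) + 1 := by ring
    rw [h, pow_succ]; ring
  rw [h1, one_mul, Finset.sum_congr rfl h2, Finset.sum_neg_distrib]
  ring

lemma fin_val_add_one (n : ℕ) [NeZero n] (h2 : 2 ≤ n) (i : Fin n) :
    ((i + 1 : Fin n) : ℕ) = (i.val + 1) % n := by
  have h1 : (1 : ℕ) % n = 1 := Nat.mod_eq_of_lt (by omega)
  rw [Fin.val_add, Fin.val_one', h1]

lemma fin_sign (n : ℕ) [NeZero n] (hn : 2 ∣ n) (h2 : 2 ≤ n) (i : Fin n) :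
    ((-1 : ℝ)) ^ (((i + 1 : Fin n)) : ℕ) = -(-1) ^ (i : ℕ) := by
  rw [fin_val_add_one n h2 i, neg_one_pow_mod n _ hn, pow_succ]
  ring

end aux

/-- An ideal `n`-gon in the hyperbolic plane with `n` even admits an
immersed horogon if and only if its metric residue is zero; in that case it admits a
one-parameter family of immersed horogons. -/
theorem stmt6 (n : ℕ) [NeZero n] (heven : Even n) (h4 : 4 ≤ n)
    (v : Fin n → ℝ) (hv : StrictMono v) :
    ((∃ s : Fin n → ℝ, IsHorogon n v s) ↔ polygonResidue n v = 0) ∧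
    (polygonResidue n v = 0 →
      ∃ F : ℝ → (Fin n → ℝ), Function.Injective F ∧ ∀ c : ℝ, IsHorogon n v (F c)) := by
  have hdvd : 2 ∣ n := heven.two_dvd
  have h2 : 2 ≤ n := by omega
  -- sides are nondegenerate
  have hne : ∀ i : Fin n, v i ≠ v (i + 1) := by
    intro i h
    have h10 : (1 : Fin n) ≠ 0 := by
      intro h1
      have h1' := congrArg Fin.val h1
      rw [Fin.val_one'] at h1'
      simp at h1'
      omega
    have hii : i = i + 1 := hv.injective h
    apply h10
    nth_rewrite 1 [← add_zero i] at hii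
    exact (add_left_cancel hii).symm
  have hpos : ∀ i : Fin n, 0 < (v i - v (i + 1)) ^ 2 := by
    intro i
    have : v i - v (i + 1) ≠ 0 := sub_ne_zero_of_ne (hne i)
    positivity
  -- residue rewritten with Lfun
  have hL : ∀ i : Fin n, Lfun n v i.val = Real.log ((v i - v (i + 1)) ^ 2) := by
    intro i
    unfold Lfun
    rw [Fin.cast_val_eq_self]
  have hres : polygonResidue n v = ∑ j ∈ Finset.range n, (-1 : ℝ) ^ j * Lfun n v j := by
    unfold polygonResidue
    rw [← Fin.sum_univ_eq_sum_range (fun j => (-1 : ℝ) ^ j * Lfun n v j) n]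
    exact Finset.sum_congr rfl (fun i _ => by rw [hL i])
  -- Forward direction: horogon implies residue zero
  have forward : (∃ s : Fin n → ℝ, IsHorogon n v s) → polygonResidue n v = 0 := by
    rintro ⟨s, hspos, htan⟩
    unfold polygonResidue
    have step : ∀ i : Fin n, (-1 : ℝ) ^ (i : ℕ) * Real.log ((v i - v (i + 1)) ^ 2)
        = (-1 : ℝ) ^ (i : ℕ) * Real.log (s i)
          - (-1 : ℝ) ^ (((i + 1 : Fin n)) : ℕ) * Real.log (s (i + 1)) := by
      intro i
      rw [htan i, Real.log_mul (ne_of_gt (hspos i)) (ne_of_gt (hspos (i + 1))),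
        fin_sign n hdvd h2 i]
      ring
    rw [Finset.sum_congr rfl (fun i _ => step i), Finset.sum_sub_distrib]
    rw [← Equiv.sum_comp (Equiv.addRight (1 : Fin n))
      (fun k : Fin n => (-1 : ℝ) ^ (k : ℕ) * Real.log (s k))]
    simp [Equiv.addRight]
  -- Backward direction: residue zero gives a one-parameter family
  have hfam : polygonResidue n v = 0 →
      ∃ F : ℝ → (Fin n → ℝ), Function.Injective F ∧ ∀ c : ℝ, IsHorogon n v (F c) := by
    intro hres0
    -- closure of the recursion
    have hclose : ∀ i : Fin n,
        ufun n v i.val + ufun n v ((i + 1 : Fin n)).val = Lfun n v i.val := by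
      intro i
      rcases lt_or_ge (i.val + 1) n with hlt | hge
      · have hv1 : ((i + 1 : Fin n)).val = i.val + 1 := by
          rw [fin_val_add_one n h2 i, Nat.mod_eq_of_lt hlt]
        rw [hv1, ufun_succ]
        ring
      · have hieq : i.val = n - 1 := by have := i.isLt; omega
        have hv1 : ((i + 1 : Fin n)).val = 0 := by
          rw [fin_val_add_one n h2 i, hieq]
          have h : n - 1 + 1 = n := by omega
          rw [h, Nat.mod_self]
        have hu0 : ufun n v 0 = 0 := by simp [ufun]
        rw [hv1, hu0, add_zero, hieq]
        have hres' : ∑ j ∈ Finset.range n, (-1 : ℝ) ^ j * Lfun n v j = 0 := by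
          rw [← hres]; exact hres0
        have hres'' : (∑ j ∈ Finset.range ((n - 1) + 1), (-1 : ℝ) ^ j * Lfun n v j) = 0 := by
          have h : (n - 1) + 1 = n := by omega
          rw [h]; exact hres'
        rw [Finset.sum_range_succ] at hres''
        have hsign : ((-1 : ℝ)) ^ (n - 1) = -1 := by
          have hodd : Odd (n - 1) := by
            rcases heven with ⟨m, hm⟩
            exact ⟨m - 1, by omega⟩
          exact hodd.neg_one_pow
        have huval : ufun n v (n - 1)
            = ∑ j ∈ Finset.range (n - 1), (-1 : ℝ) ^ j * Lfun n v j := by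
          unfold ufun
          refine Finset.sum_congr rfl (fun j hj => ?_)
          have hexp : n - 1 + j + 1 = n + j := by omega
          rw [hexp, pow_add, heven.neg_one_pow]
          ring
        rw [hsign] at hres''
        rw [huval]
        linarith [hres'']
    refine ⟨fun c i => Real.exp ((-1 : ℝ) ^ (i : ℕ) * c + ufun n v i.val), ?_, ?_⟩
    · intro c c' h
      have h0 := congrFun h 0
      simp only [Fin.val_zero, pow_zero, one_mul] at h0
      have := Real.exp_injective h0
      linarith
    · intro c
      constructor
      · intro i; exact Real.exp_pos _
      · intro i
        show _ = Real.exp _ * Real.exp _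
        rw [← Real.exp_add]
        have hexp : ((-1 : ℝ) ^ (i : ℕ) * c + ufun n v i.val)
            + ((-1 : ℝ) ^ (((i + 1 : Fin n)) : ℕ) * c + ufun n v ((i + 1 : Fin n)).val)
            = Lfun n v i.val := by
          rw [fin_sign n hdvd h2 i]
          have := hclose i
          linarith
        rw [hexp, hL i, Real.exp_log (hpos i)]
  exact ⟨⟨forward, fun h => by
    obtain ⟨F, _, hF⟩ := hfam h
    exact ⟨F 0, hF 0⟩⟩, hfam⟩
end

section
/- Let C be a circle of hyperbolic radius r in H^2 with center o, and let g_x, g_y be geodesics tangent to C at points x, y ∈ C. If g_x and g_y are disjoint (including at infinity), then the angle ∠(x, o, y) between the radii from o to x and y is at least 2·arcsin(sech(r)). -/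
/-- The (unoriented) angle `∠(x, 0, y)` at the origin between two nonzero points of
the plane `ℂ`. -/
noncomputable def cangle (x y : ℂ) : ℝ :=
  Real.arccos ((x.re * y.re + x.im * y.im) / (‖x‖ * ‖y‖))

/-- In the Poincaré disk model (taking the circle's hyperbolic center at the origin,
so that the hyperbolic circle of hyperbolic radius `r` is the Euclidean circle of
radius `ρ = tanh(r/2)`), the hyperbolic geodesic tangent to that circle at a point
`x` with `|x| = ρ` is the arc, inside the closed unit disk, of the Euclidean circle
with center `((1+ρ²)/(2ρ²))·x` and radius `(1−ρ²)/(2ρ)` (orthogonal to the unit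
circle and tangent to the circle of radius `ρ` at `x`). -/
noncomputable def diskTangentGeodesic (ρ : ℝ) (x : ℂ) : Set ℂ :=
  {z : ℂ | ‖z‖ ≤ 1 ∧
    ‖z - ((1 + ρ ^ 2) / (2 * ρ ^ 2)) • x‖ = (1 - ρ ^ 2) / (2 * ρ)}

set_option maxHeartbeats 1000000

open Complex in
lemma core (ρ : ℝ) (hρ0 : 0 < ρ) (hρ1 : ρ < 1) (x y : ℂ)
    (hx : ‖x‖ = ρ) (hy : ‖y‖ = ρ) (hxy : x ≠ y)
    (htle : ‖y - x‖ ≤ 2 * ρ * (1 - ρ^2) / (1 + ρ^2)) :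
    ¬ Disjoint (diskTangentGeodesic ρ x) (diskTangentGeodesic ρ y) := by
  set k : ℝ := (1 + ρ ^ 2) / (2 * ρ ^ 2) with hkdef
  set R : ℝ := (1 - ρ ^ 2) / (2 * ρ) with hRdef
  set t : ℝ := ‖y - x‖ with htdef
  have hwne : y - x ≠ 0 := sub_ne_zero.2 (Ne.symm hxy)
  have ht0 : 0 < t := by
    rw [htdef]; exact norm_pos_iff.2 hwne
  have hR0 : 0 < R := by
    rw [hRdef]; apply div_pos (by nlinarith) (by positivity)
  have hk0 : 0 < k := by rw [hkdef]; positivity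
  have hkt : k * t ≤ 2 * R := by
    have heq : k * (2 * ρ * (1 - ρ^2) / (1 + ρ^2)) = 2 * R := by
      rw [hkdef, hRdef]; field_simp
    calc k * t ≤ k * (2 * ρ * (1 - ρ^2) / (1 + ρ^2)) :=
          mul_le_mul_of_nonneg_left htle hk0.le
      _ = 2 * R := heq
  have hsqnn : 0 ≤ R ^ 2 - k ^ 2 * t ^ 2 / 4 := by
    nlinarith [mul_nonneg (sub_nonneg.2 hkt) (by positivity : (0:ℝ) ≤ 2 * R + k * t)]
  set h : ℝ := Real.sqrt (R ^ 2 - k ^ 2 * t ^ 2 / 4) with hhdef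
  have hh0 : 0 ≤ h := Real.sqrt_nonneg _
  have hhsq : h ^ 2 = R ^ 2 - k ^ 2 * t ^ 2 / 4 := Real.sq_sqrt hsqnn
  set H : ℝ := h / t with hHdef
  have hHsq : H ^ 2 * t ^ 2 = R ^ 2 - k ^ 2 * t ^ 2 / 4 := by
    rw [hHdef, div_pow, div_mul_cancel₀ _ (by positivity : t ^ 2 ≠ 0)]; exact hhsq
  -- complex relations
  have hxx : x * (starRingEnd ℂ) x = ((ρ : ℂ)) ^ 2 := by
    rw [Complex.mul_conj, Complex.normSq_eq_norm_sq, hx]; push_cast; ring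
  have hyy : y * (starRingEnd ℂ) y = ((ρ : ℂ)) ^ 2 := by
    rw [Complex.mul_conj, Complex.normSq_eq_norm_sq, hy]; push_cast; ring
  have htt : (y - x) * ((starRingEnd ℂ) y - (starRingEnd ℂ) x) = ((t : ℂ)) ^ 2 := by
    rw [← map_sub, Complex.mul_conj, Complex.normSq_eq_norm_sq, ← htdef]; push_cast; ring
  have hI : Complex.I ^ 2 = -1 := Complex.I_sq
  have hHC : ((H : ℂ)) ^ 2 * (t : ℂ) ^ 2 = (R : ℂ) ^ 2 - (k : ℂ) ^ 2 * (t : ℂ) ^ 2 / 4 := by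
    exact_mod_cast congrArg Complex.ofReal hHsq
  have hd : k ^ 2 * ρ ^ 2 = R ^ 2 + 1 := by
    rw [hkdef, hRdef]; field_simp; ring
  have hdC : (k : ℂ) ^ 2 * ((ρ : ℂ)) ^ 2 = (R : ℂ) ^ 2 + 1 := by
    exact_mod_cast congrArg Complex.ofReal hd
  set z : ℝ → ℂ := fun e => (k : ℂ) * (x + y) / 2 + (e : ℂ) * Complex.I * (H : ℂ) * (y - x)
    with hzdef
  -- each z e lies on both tangent circles
  have key : ∀ (e : ℝ), e ^ 2 = 1 → ∀ p : ℂ, (p = x ∨ p = y) →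
      ‖z e - (k : ℝ) • p‖ = R := by
    intro e he p hp
    have heC : ((e : ℂ)) ^ 2 = 1 := by exact_mod_cast congrArg Complex.ofReal he
    have hconj : (z e - (k:ℝ) • p) * (starRingEnd ℂ) (z e - (k:ℝ) • p) = ((R^2 : ℝ) : ℂ) := by
      rcases hp with hpx | hpy
      · rw [hpx]
        simp only [hzdef, Complex.real_smul, map_sub, map_add, map_mul, map_div₀,
          Complex.conj_ofReal, Complex.conj_I, map_ofNat]
        push_cast
        linear_combination ((k:ℂ)^2/4 + (e:ℂ)^2*(H:ℂ)^2) * htt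
          + (H:ℂ)^2 * (t:ℂ)^2 * heC + hHC
          - (e:ℂ)^2*(H:ℂ)^2*((y-x)*((starRingEnd ℂ) y - (starRingEnd ℂ) x)) * hI
      · rw [hpy]
        simp only [hzdef, Complex.real_smul, map_sub, map_add, map_mul, map_div₀,
          Complex.conj_ofReal, Complex.conj_I, map_ofNat]
        push_cast
        linear_combination ((k:ℂ)^2/4 + (e:ℂ)^2*(H:ℂ)^2) * htt
          + (H:ℂ)^2 * (t:ℂ)^2 * heC + hHC
          - (e:ℂ)^2*(H:ℂ)^2*((y-x)*((starRingEnd ℂ) y - (starRingEnd ℂ) x)) * hI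
    have hns : Complex.normSq (z e - (k:ℝ) • p) = R ^ 2 := by
      have := Complex.mul_conj (z e - (k:ℝ) • p)
      rw [this] at hconj
      exact_mod_cast hconj
    rw [Complex.norm_def, hns, Real.sqrt_sq hR0.le]
  -- product of the two absolute values is 1
  have hprodC : z 1 * z (-1) * ((starRingEnd ℂ) y - (starRingEnd ℂ) x) = -(y - x) := by
    simp only [hzdef]
    push_cast
    linear_combination ((H:ℂ)^2*(y-x) + (k:ℂ)^2/4*(y-x)) * htt + (y-x) * hHC
      + (k:ℂ)^2 * x * hyy - (k:ℂ)^2 * y * hxx - (y-x) * hdC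
      - (H:ℂ)^2*(y-x)^2*((starRingEnd ℂ) y - (starRingEnd ℂ) x) * hI
  have hprod : ‖z 1‖ * ‖z (-1)‖ = 1 := by
    have := congrArg (‖·‖) hprodC
    rw [norm_mul, norm_mul, norm_neg] at this
    have habsconj : ‖(starRingEnd ℂ) y - (starRingEnd ℂ) x‖ = t := by
      rw [← map_sub, Complex.norm_conj, ← htdef]
    rw [habsconj, ← htdef] at this
    field_simp at this
    exact this
  -- one of them is in the closed disk
  have hone : ‖z 1‖ ≤ 1 ∨ ‖z (-1)‖ ≤ 1 := by
    by_contra hcon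
    push_neg at hcon
    nlinarith [hcon.1, hcon.2, norm_nonneg (z 1), norm_nonneg (z (-1))]
  rw [Set.not_disjoint_iff]
  have hmem : ∀ (e : ℝ), e ^ 2 = 1 → ‖z e‖ ≤ 1 →
      z e ∈ diskTangentGeodesic ρ x ∩ diskTangentGeodesic ρ y := by
    intro e he hle
    refine ⟨⟨hle, ?_⟩, ⟨hle, ?_⟩⟩
    · rw [← hkdef, ← hRdef]; exact key e he x (Or.inl rfl)
    · rw [← hkdef, ← hRdef]; exact key e he y (Or.inr rfl)
  rcases hone with h1 | h1
  · exact ⟨z 1, hmem 1 (by norm_num) h1⟩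
  · exact ⟨z (-1), hmem (-1) (by norm_num) h1⟩

/-- Let `C` be a circle of hyperbolic radius `r` in `H²` with center
`o`, and let `g_x, g_y` be geodesics tangent to `C` at points `x, y ∈ C`.  If `g_x`
and `g_y` are disjoint (including at infinity, i.e. disjoint as arcs in the closed
disk), then the angle `∠(x, o, y)` between the radii from `o` to `x` and `y` is at
least `2·arcsin(sech r)`. -/
theorem stmt9 (r : ℝ) (hr : 0 < r) (x y : ℂ)
    (hx : ‖x‖ = Real.tanh (r / 2))
    (hy : ‖y‖ = Real.tanh (r / 2))
    (hxy : x ≠ y)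
    (hdisj : Disjoint (diskTangentGeodesic (Real.tanh (r / 2)) x)
      (diskTangentGeodesic (Real.tanh (r / 2)) y)) :
    2 * Real.arcsin (1 / Real.cosh r) ≤ cangle x y := by
  set ρ : ℝ := Real.tanh (r / 2) with hρdef
  have hc0 : 0 < Real.cosh (r / 2) := Real.cosh_pos _
  have hs0 : 0 < Real.sinh (r / 2) := Real.sinh_pos_iff.2 (by linarith)
  have hpyth : Real.cosh (r/2) ^ 2 - Real.sinh (r/2) ^ 2 = 1 := Real.cosh_sq_sub_sinh_sq _
  have hρ0 : 0 < ρ := by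
    rw [hρdef, Real.tanh_eq_sinh_div_cosh]; positivity
  have hρ1 : ρ < 1 := by
    rw [hρdef, Real.tanh_eq_sinh_div_cosh, div_lt_one hc0]; nlinarith
  have hch : Real.cosh r = Real.cosh (r/2) ^ 2 + Real.sinh (r/2) ^ 2 := by
    rw [show r = r/2 + r/2 by ring, Real.cosh_add]; ring
  have hchpos : 0 < Real.cosh r := Real.cosh_pos _
  set s : ℝ := 1 / Real.cosh r with hsdef
  have hs0' : 0 < s := by positivity
  have hs1 : s ≤ 1 := by
    rw [hsdef]; rw [div_le_one hchpos]; exact Real.one_le_cosh r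
  have hsech : s = (1 - ρ ^ 2) / (1 + ρ ^ 2) := by
    rw [hsdef, hρdef, Real.tanh_eq_sinh_div_cosh, hch]
    rw [div_pow]
    field_simp
    linarith [hpyth]
  by_contra hcon
  push_neg at hcon
  -- coordinates
  have hx2 : x.re ^ 2 + x.im ^ 2 = ρ ^ 2 := by
    have := Complex.sq_norm x
    rw [Complex.normSq_apply, hx] at this
    linear_combination - this
  have hy2 : y.re ^ 2 + y.im ^ 2 = ρ ^ 2 := by
    have := Complex.sq_norm y
    rw [Complex.normSq_apply, hy] at this
    linear_combination - this
  set dot : ℝ := x.re * y.re + x.im * y.im with hdotdef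
  have hCS : dot ^ 2 ≤ ρ ^ 2 * ρ ^ 2 := by
    rw [hdotdef]
    nlinarith [sq_nonneg (x.re * y.im - x.im * y.re), hx2, hy2]
  have hq1 : -1 ≤ dot / (ρ * ρ) := by
    rw [le_div_iff₀ (by positivity)]
    nlinarith
  have hq2 : dot / (ρ * ρ) ≤ 1 := by
    rw [div_le_one (by positivity)]
    nlinarith
  have hcangle : cangle x y = Real.arccos (dot / (ρ * ρ)) := by
    rw [cangle, hx, hy, hdotdef]
  have hmem1 : cangle x y ∈ Set.Icc 0 Real.pi := by
    rw [hcangle]; exact ⟨Real.arccos_nonneg _, Real.arccos_le_pi _⟩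
  have hmem2 : 2 * Real.arcsin s ∈ Set.Icc 0 Real.pi := by
    constructor
    · have := Real.arcsin_nonneg.2 hs0'.le; linarith
    · have := Real.arcsin_le_pi_div_two s
      have := Real.pi_pos
      linarith
  have hcoslt : Real.cos (2 * Real.arcsin s) < Real.cos (cangle x y) :=
    Real.strictAntiOn_cos hmem1 hmem2 hcon
  have hcos1 : Real.cos (cangle x y) = dot / (ρ * ρ) := by
    rw [hcangle, Real.cos_arccos hq1 hq2]
  have hcos2 : Real.cos (2 * Real.arcsin s) = 1 - 2 * s ^ 2 := by
    rw [Real.cos_two_mul, Real.cos_arcsin]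
    rw [Real.sq_sqrt (by nlinarith)]
    ring
  rw [hcos1, hcos2] at hcoslt
  have hdotgt : ρ ^ 2 * (1 - 2 * s ^ 2) < dot := by
    have := (lt_div_iff₀ (by positivity : (0:ℝ) < ρ * ρ)).1 hcoslt
    nlinarith
  set t : ℝ := ‖y - x‖ with htdef
  have ht2 : t ^ 2 = 2 * ρ ^ 2 - 2 * dot := by
    have := Complex.sq_norm (y - x)
    rw [Complex.normSq_apply, ← htdef, Complex.sub_re, Complex.sub_im] at this
    linear_combination this + hx2 + hy2 + 2 * hdotdef
  have htnn : 0 ≤ t := norm_nonneg _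
  have htlt : t ≤ 2 * ρ * (1 - ρ ^ 2) / (1 + ρ ^ 2) := by
    have h2ρs : 2 * ρ * (1 - ρ ^ 2) / (1 + ρ ^ 2) = 2 * ρ * s := by
      rw [hsech]; field_simp
    rw [h2ρs]
    have h1 : t ^ 2 ≤ (2 * ρ * s) ^ 2 := by nlinarith [ht2, hdotgt]
    calc t = Real.sqrt (t ^ 2) := (Real.sqrt_sq htnn).symm
      _ ≤ Real.sqrt ((2 * ρ * s) ^ 2) := Real.sqrt_le_sqrt h1
      _ = 2 * ρ * s := Real.sqrt_sq (by positivity)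
  exact core ρ hρ0 hρ1 x y hx hy hxy htlt hdisj
end

section
/- Let V = {x + iy : 0 ≤ x ≤ X, y ≥ 1} and V' = {x + iy : 0 ≤ x ≤ X', y ≥ 1} be spikes in the upper half-plane model of H^2, and let f : [0, X] → [0, X'] be K-Lipschitz. Then for every L ≥ max{K, 1}, the map F(x + iy) = f(x) + i·y^L is L-Lipschitz from V to V' with respect to the hyperbolic metric, and F restricted to each vertical boundary geodesic is affine with slope L (with respect to hyperbolic arc length). -/
open UpperHalfPlane Real


lemma mul_sinh_le' {c x : ℝ} (hc : 1 ≤ c) (hx : 0 ≤ x) : c * Real.sinh x ≤ Real.sinh (c * x) := by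
  have hd : ∀ y : ℝ, HasDerivAt (fun x => Real.sinh (c * x) - c * Real.sinh x)
      (Real.cosh (c * y) * (c * 1) - c * Real.cosh y) y := fun y =>
    ((Real.hasDerivAt_sinh (c * y)).comp y ((hasDerivAt_id y).const_mul c)).sub
      ((Real.hasDerivAt_sinh y).const_mul c)
  have hmono : MonotoneOn (fun x => Real.sinh (c * x) - c * Real.sinh x) (Set.Ici 0) := by
    apply monotoneOn_of_deriv_nonneg (convex_Ici 0)
    · exact fun y _ => ((hd y).continuousAt).continuousWithinAt
    · exact fun y _ => ((hd y).differentiableAt).differentiableWithinAt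
    · intro y hy
      rw [interior_Ici] at hy
      have hy0 : (0:ℝ) < y := hy
      rw [(hd y).deriv]
      have hcy : Real.cosh y ≤ Real.cosh (c * y) := by
        rw [Real.cosh_le_cosh]
        rw [abs_of_nonneg hy.le, abs_of_nonneg (by nlinarith : (0:ℝ) ≤ c * y)]
        nlinarith
      nlinarith [Real.cosh_pos y]
  have h0 := hmono (Set.self_mem_Ici) (Set.mem_Ici.2 hx) hx
  simp only [mul_zero, Real.sinh_zero, sub_zero, sub_self] at h0
  linarith

lemma g_mono {c : ℝ} (hc : 1 ≤ c) :
    MonotoneOn (fun x => Real.sinh (c * x) ^ 2 - c ^ 2 * Real.sinh x ^ 2) (Set.Ici 0) := by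
  have hd : ∀ y : ℝ, HasDerivAt (fun x => Real.sinh (c * x) ^ 2 - c ^ 2 * Real.sinh x ^ 2)
      (2 * Real.sinh (c * y) ^ 1 * (Real.cosh (c * y) * (c * 1)) -
        c ^ 2 * (2 * Real.sinh y ^ 1 * Real.cosh y)) y := fun y =>
    (((Real.hasDerivAt_sinh (c * y)).comp y ((hasDerivAt_id y).const_mul c)).pow 2).sub
      (((Real.hasDerivAt_sinh y).pow 2).const_mul (c ^ 2))
  apply monotoneOn_of_deriv_nonneg (convex_Ici 0)
  · exact fun y _ => ((hd y).continuousAt).continuousWithinAt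
  · exact fun y _ => ((hd y).differentiableAt).differentiableWithinAt
  · intro y hy
    rw [interior_Ici] at hy
    have hy0 : (0:ℝ) < y := hy
    rw [(hd y).deriv]
    have h1 : c * Real.sinh (2 * y) ≤ Real.sinh (c * (2 * y)) :=
      mul_sinh_le' hc (by positivity)
    rw [Real.sinh_two_mul] at h1
    have h2 : Real.sinh (c * (2 * y)) = 2 * Real.sinh (c * y) * Real.cosh (c * y) := by
      rw [show c * (2 * y) = 2 * (c * y) by ring, Real.sinh_two_mul]
    rw [h2] at h1
    have hc0 : (0:ℝ) < c := by linarith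
    nlinarith

lemma sinh_half_log {y₁ y₂ : ℝ} (h1 : 0 < y₁) (h2 : 0 < y₂) :
    Real.sinh ((Real.log y₁ - Real.log y₂) / 2) = (y₁ - y₂) / (2 * Real.sqrt (y₁ * y₂)) := by
  have s1 : (0:ℝ) < Real.sqrt y₁ := Real.sqrt_pos.2 h1
  have s2 : (0:ℝ) < Real.sqrt y₂ := Real.sqrt_pos.2 h2
  have e1 : Real.exp ((Real.log y₁ - Real.log y₂) / 2) = Real.sqrt y₁ / Real.sqrt y₂ := by
    rw [show (Real.log y₁ - Real.log y₂) / 2 = Real.log y₁ / 2 - Real.log y₂ / 2 by ring,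
      Real.exp_sub, ← Real.log_sqrt h1.le, ← Real.log_sqrt h2.le,
      Real.exp_log s1, Real.exp_log s2]
  have e2 : Real.exp (-((Real.log y₁ - Real.log y₂) / 2)) = Real.sqrt y₂ / Real.sqrt y₁ := by
    rw [show -((Real.log y₁ - Real.log y₂) / 2) = (Real.log y₂ - Real.log y₁) / 2 by ring]
    rw [show (Real.log y₂ - Real.log y₁) / 2 = Real.log y₂ / 2 - Real.log y₁ / 2 by ring,
      Real.exp_sub, ← Real.log_sqrt h1.le, ← Real.log_sqrt h2.le,
      Real.exp_log s1, Real.exp_log s2]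
  rw [Real.sinh_eq, e1, e2, Real.sqrt_mul h1.le]
  have q1 : Real.sqrt y₁ * Real.sqrt y₁ = y₁ := Real.mul_self_sqrt h1.le
  have q2 : Real.sqrt y₂ * Real.sqrt y₂ = y₂ := Real.mul_self_sqrt h2.le
  rw [div_sub_div _ _ (ne_of_gt s2) (ne_of_gt s1), q1, q2, div_div]
  ring_nf

lemma key_ineq {L s t a2 : ℝ} (hL : 1 ≤ L) (hs : 0 ≤ s) (hst : s ≤ t)
    (ha : a2 = Real.sinh t ^ 2 - Real.sinh s ^ 2) :
    L ^ 2 * a2 + Real.sinh (L * s) ^ 2 ≤ Real.sinh (L * t) ^ 2 := by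
  have h := g_mono hL (Set.mem_Ici.2 hs) (Set.mem_Ici.2 (hs.trans hst)) hst
  simp only at h
  rw [ha]
  linarith


/-- The spike map `F(x + iy) = f(x) + i·y^L` of the upper half-plane. -/
noncomputable def spikeMap (f : ℝ → ℝ) (L : ℝ) (z : UpperHalfPlane) : UpperHalfPlane :=
  ⟨(f z.re : ℂ) + (z.im ^ L : ℝ) * Complex.I, by
    simp only [Complex.add_im, Complex.ofReal_im, Complex.mul_im, Complex.I_im,
      Complex.ofReal_re, Complex.I_re, mul_zero, mul_one, zero_add, add_zero]
    exact Real.rpow_pos_of_pos z.im_pos L⟩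

lemma spikeMap_coe (f : ℝ → ℝ) (L : ℝ) (z : UpperHalfPlane) :
    (spikeMap f L z : ℂ) = (f z.re : ℂ) + (z.im ^ L : ℝ) * Complex.I := rfl

lemma spikeMap_re (f : ℝ → ℝ) (L : ℝ) (z : UpperHalfPlane) :
    (spikeMap f L z).re = f z.re := by
  rw [UpperHalfPlane.re, spikeMap_coe]
  simp

lemma spikeMap_im (f : ℝ → ℝ) (L : ℝ) (z : UpperHalfPlane) :
    (spikeMap f L z).im = z.im ^ L := by
  rw [UpperHalfPlane.im, spikeMap_coe]
  simp



set_option maxHeartbeats 1000000 in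
lemma main_ineq {K L x₁ x₂ fd y₁ y₂ : ℝ} (hKL : K ≤ L) (hL1 : 1 ≤ L)
    (hy1 : 1 ≤ y₁) (hy2 : 1 ≤ y₂) (hfd : |fd| ≤ K * |x₁ - x₂|) :
    Real.arsinh (Real.sqrt (fd ^ 2 + (y₁ ^ L - y₂ ^ L) ^ 2) / (2 * Real.sqrt (y₁ ^ L * y₂ ^ L)))
      ≤ L * Real.arsinh
          (Real.sqrt ((x₁ - x₂) ^ 2 + (y₁ - y₂) ^ 2) / (2 * Real.sqrt (y₁ * y₂))) := by
  have hL0 : (0:ℝ) ≤ L := zero_le_one.trans hL1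
  have hy1' : (0:ℝ) < y₁ := lt_of_lt_of_le one_pos hy1
  have hy2' : (0:ℝ) < y₂ := lt_of_lt_of_le one_pos hy2
  have hP : (0:ℝ) < y₁ ^ L := Real.rpow_pos_of_pos hy1' L
  have hQ : (0:ℝ) < y₂ ^ L := Real.rpow_pos_of_pos hy2' L
  set u := Real.sqrt ((x₁ - x₂) ^ 2 + (y₁ - y₂) ^ 2) / (2 * Real.sqrt (y₁ * y₂)) with hudef
  set u' := Real.sqrt (fd ^ 2 + (y₁ ^ L - y₂ ^ L) ^ 2) /
      (2 * Real.sqrt (y₁ ^ L * y₂ ^ L)) with hu'def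
  have hu0 : 0 ≤ u := by positivity
  have hu'0 : 0 ≤ u' := by positivity
  set t := Real.arsinh u with htdef
  have ht0 : 0 ≤ t := Real.arsinh_nonneg_iff.2 hu0
  have hsinht : Real.sinh t = u := Real.sinh_arsinh u
  set s' := (Real.log y₁ - Real.log y₂) / 2 with hs'def
  have hB : Real.sinh s' = (y₁ - y₂) / (2 * Real.sqrt (y₁ * y₂)) := sinh_half_log hy1' hy2'
  have hB' : Real.sinh (L * s') = (y₁ ^ L - y₂ ^ L) / (2 * Real.sqrt (y₁ ^ L * y₂ ^ L)) := by
    rw [show L * s' = (Real.log (y₁ ^ L) - Real.log (y₂ ^ L)) / 2 by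
      rw [Real.log_rpow hy1', Real.log_rpow hy2']; ring]
    exact sinh_half_log hP hQ
  have hyy : Real.sqrt (y₁ * y₂) ^ 2 = y₁ * y₂ := Real.sq_sqrt (by positivity)
  have hPQ : Real.sqrt (y₁ ^ L * y₂ ^ L) ^ 2 = y₁ ^ L * y₂ ^ L := Real.sq_sqrt (by positivity)
  have hu2 : u ^ 2 = (x₁ - x₂) ^ 2 / (4 * (y₁ * y₂)) + Real.sinh s' ^ 2 := by
    rw [hudef, div_pow, Real.sq_sqrt (by positivity), hB, div_pow, mul_pow, hyy]
    rw [show (2:ℝ) ^ 2 * (y₁ * y₂) = 4 * (y₁ * y₂) by ring, add_div]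
  have hu'2 : u' ^ 2 = fd ^ 2 / (4 * (y₁ ^ L * y₂ ^ L)) + Real.sinh (L * s') ^ 2 := by
    rw [hu'def, div_pow, Real.sq_sqrt (by positivity), hB', div_pow, mul_pow, hPQ]
    rw [show (2:ℝ) ^ 2 * (y₁ ^ L * y₂ ^ L) = 4 * (y₁ ^ L * y₂ ^ L) by ring, add_div]
  set s := |s'| with hsdef
  have hsinhs : Real.sinh s ^ 2 = Real.sinh s' ^ 2 := by
    rw [hsdef, ← Real.abs_sinh, sq_abs]
  have hsinhLs : Real.sinh (L * s) ^ 2 = Real.sinh (L * s') ^ 2 := by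
    have h : L * s = |L * s'| := by rw [abs_mul, abs_of_nonneg hL0, hsdef]
    rw [h, ← Real.abs_sinh, sq_abs]
  have hst : s ≤ t := by
    rw [← Real.sinh_le_sinh, hsinht]
    have h1 : |Real.sinh s'| ≤ u := by
      rw [← Real.sqrt_sq_eq_abs, ← Real.sqrt_sq hu0]
      apply Real.sqrt_le_sqrt
      have hpos : 0 ≤ (x₁ - x₂) ^ 2 / (4 * (y₁ * y₂)) := by positivity
      linarith [hu2]
    calc Real.sinh s = |Real.sinh s'| := by rw [hsdef, Real.abs_sinh]
      _ ≤ u := h1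
  have ha : (x₁ - x₂) ^ 2 / (4 * (y₁ * y₂)) = Real.sinh t ^ 2 - Real.sinh s ^ 2 := by
    rw [hsinht, hsinhs]; linarith [hu2]
  have hkey := key_ineq hL1 (abs_nonneg s') hst ha
  have hnum : fd ^ 2 ≤ L ^ 2 * (x₁ - x₂) ^ 2 := by
    have h1 : |fd| ≤ L * |x₁ - x₂| :=
      hfd.trans (mul_le_mul_of_nonneg_right hKL (abs_nonneg _))
    calc fd ^ 2 = |fd| ^ 2 := (sq_abs _).symm
      _ ≤ (L * |x₁ - x₂|) ^ 2 := pow_le_pow_left₀ (abs_nonneg _) h1 2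
      _ = L ^ 2 * (x₁ - x₂) ^ 2 := by rw [mul_pow, sq_abs]
  have hden : y₁ * y₂ ≤ y₁ ^ L * y₂ ^ L := by
    rw [← Real.mul_rpow hy1'.le hy2'.le]
    calc y₁ * y₂ = (y₁ * y₂) ^ (1:ℝ) := (Real.rpow_one _).symm
      _ ≤ (y₁ * y₂) ^ L := Real.rpow_le_rpow_of_exponent_le (by nlinarith) hL1
  have hfrac : fd ^ 2 / (4 * (y₁ ^ L * y₂ ^ L))
      ≤ L ^ 2 * ((x₁ - x₂) ^ 2 / (4 * (y₁ * y₂))) := by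
    rw [mul_div_assoc']
    have h44 : 4 * (y₁ * y₂) ≤ 4 * (y₁ ^ L * y₂ ^ L) := by linarith
    exact div_le_div₀ (by positivity) hnum (by positivity) h44
  have hsq : u' ^ 2 ≤ Real.sinh (L * t) ^ 2 := by
    rw [hu'2, ← hsinhLs]
    linarith
  have hfin : u' ≤ Real.sinh (L * t) := by
    have hsLt : 0 ≤ Real.sinh (L * t) := Real.sinh_nonneg_iff.2 (by positivity)
    calc u' = Real.sqrt (u' ^ 2) := (Real.sqrt_sq hu'0).symm
      _ ≤ Real.sqrt (Real.sinh (L * t) ^ 2) := Real.sqrt_le_sqrt hsq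
      _ = Real.sinh (L * t) := Real.sqrt_sq hsLt
  have h2 := Real.arsinh_le_arsinh.2 hfin
  rwa [Real.arsinh_sinh] at h2


/-- Let `V = {x + iy : 0 ≤ x ≤ X, y ≥ 1}` and
`V' = {x + iy : 0 ≤ x ≤ X', y ≥ 1}` be spikes in the upper half-plane model of `H²`,
and let `f : [0, X] → [0, X']` be `K`-Lipschitz.  Then for every `L ≥ max{K, 1}`, the
map `F(x + iy) = f(x) + i·y^L` is `L`-Lipschitz from `V` to `V'` with respect to the
hyperbolic metric, and `F` restricted to each vertical boundary geodesic of `V` is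
affine with slope `L` with respect to hyperbolic arc length. -/
theorem stmt11 (X X' K L : ℝ) (hK : 0 ≤ K) (f : ℝ → ℝ)
    (hf : ∀ a ∈ Set.Icc (0 : ℝ) X, ∀ b ∈ Set.Icc (0 : ℝ) X, |f a - f b| ≤ K * |a - b|)
    (hmap : Set.MapsTo f (Set.Icc (0 : ℝ) X) (Set.Icc (0 : ℝ) X'))
    (hL : max K 1 ≤ L) :
    (∀ z w : UpperHalfPlane,
      z.re ∈ Set.Icc (0 : ℝ) X → w.re ∈ Set.Icc (0 : ℝ) X →
      1 ≤ z.im → 1 ≤ w.im →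
      dist (spikeMap f L z) (spikeMap f L w) ≤ L * dist z w) ∧
    (∀ z w : UpperHalfPlane,
      z.re = w.re → (z.re = 0 ∨ z.re = X) → 1 ≤ z.im → 1 ≤ w.im →
      dist (spikeMap f L z) (spikeMap f L w) = L * dist z w) := by
  have hL1 : (1:ℝ) ≤ L := le_trans (le_max_right K 1) hL
  have hKL : K ≤ L := le_trans (le_max_left K 1) hL
  have hL0 : (0:ℝ) ≤ L := le_trans zero_le_one hL1
  constructor
  · intro z w hzX hwX hz1 hw1
    rw [UpperHalfPlane.dist_eq, UpperHalfPlane.dist_eq, spikeMap_im, spikeMap_im,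
      Complex.dist_eq_re_im, Complex.dist_eq_re_im,
      UpperHalfPlane.coe_re, UpperHalfPlane.coe_re, UpperHalfPlane.coe_im,
      UpperHalfPlane.coe_im, UpperHalfPlane.coe_re, UpperHalfPlane.coe_re,
      UpperHalfPlane.coe_im, UpperHalfPlane.coe_im,
      spikeMap_re, spikeMap_re, spikeMap_im, spikeMap_im]
    have h := main_ineq hKL hL1 hz1 hw1 (hf _ hzX _ hwX)
    linarith
  · intro z w hre _ hz1 hw1
    have hFre : (spikeMap f L z).re = (spikeMap f L w).re := by
      rw [spikeMap_re, spikeMap_re, hre]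
    rw [UpperHalfPlane.dist_of_re_eq hFre, UpperHalfPlane.dist_of_re_eq hre,
      spikeMap_im, spikeMap_im, Real.log_rpow z.im_pos, Real.log_rpow w.im_pos,
      Real.dist_eq, Real.dist_eq, ← mul_sub, abs_mul, abs_of_nonneg hL0]
end

section
/- Let f : Y → Y' be an L-Lipschitz boundary-tight map between hyperbolic surfaces with crowned boundary, and let C be an oriented n-crown of the underlying topological surface with n even. Then res_{Y'}(C) = L · res_Y(C). -/
/-- Let `f : Y → Y'` be an `L`-Lipschitz boundary-tight map between
hyperbolic surfaces with crowned boundary, and let `C` be an oriented `n`-crown with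
`n` even.  Then `res_{Y'}(C) = L · res_Y(C)`.

Metric formulation: the crown is recorded by unit-speed geodesics `γ i : ℝ → Y`
(`i : Fin n`), consecutive ones asymptotic, with horocycle-synchronized shift
parameters `r i` characterized by `dist (γ i t) (γ (i+1) (r i − t)) → 0` as `t → ∞`;
the metric residue of the crown is the alternating sum `Σ (−1)^i · r i` (which equals
`Σ ε_i ℓ(ĝ_i)` for any choice of truncating horocycles).  The map `f` is `L`-Lipschitz
and affine of slope `L` on each boundary geodesic, and `r'` records the synchronized
shifts of the image crown (whose unit-speed geodesics are `t ↦ f (γ i (t/L))`).  The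
conclusion is `Σ (−1)^i r' i = L · Σ (−1)^i r i`. -/
theorem stmt14 {Y Y' : Type*} [MetricSpace Y] [MetricSpace Y']
    (n : ℕ) [NeZero n] (hn : Even n)
    (γ : Fin n → ℝ → Y)
    (hγ : ∀ i : Fin n, ∀ s t : ℝ, dist (γ i s) (γ i t) = |s - t|)
    (L : ℝ) (hL : 0 < L)
    (f : Y → Y')
    (hf : ∀ x y : Y, dist (f x) (f y) ≤ L * dist x y)
    (haff : ∀ i : Fin n, ∀ s t : ℝ, dist (f (γ i s)) (f (γ i t)) = L * |s - t|)
    (r r' : Fin n → ℝ)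
    (hsync : ∀ i : Fin n,
      Filter.Tendsto (fun t : ℝ => dist (γ i t) (γ (i + 1) (r i - t)))
        Filter.atTop (nhds 0))
    (hsync' : ∀ i : Fin n,
      Filter.Tendsto (fun t : ℝ => dist (f (γ i (t / L))) (f (γ (i + 1) ((r' i - t) / L))))
        Filter.atTop (nhds 0)) :
    ∑ i : Fin n, (-1 : ℝ) ^ (i : ℕ) * r' i = L * ∑ i : Fin n, (-1 : ℝ) ^ (i : ℕ) * r i := by
  have key : ∀ i : Fin n, r' i = L * r i := by
    intro i
    -- image sync with a = L * r i
    have h1 : Filter.Tendsto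
        (fun t : ℝ => dist (f (γ i (t / L))) (f (γ (i + 1) ((L * r i - t) / L))))
        Filter.atTop (nhds 0) := by
      have hcomp : Filter.Tendsto (fun t : ℝ => t / L) Filter.atTop Filter.atTop :=
        Filter.tendsto_id.atTop_div_const hL
      have h0 : Filter.Tendsto
          (fun t : ℝ => dist (γ i (t / L)) (γ (i + 1) (r i - t / L)))
          Filter.atTop (nhds 0) := (hsync i).comp hcomp
      have hLs : Filter.Tendsto
          (fun t : ℝ => L * dist (γ i (t / L)) (γ (i + 1) (r i - t / L)))
          Filter.atTop (nhds 0) := by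
        simpa using h0.const_mul L
      refine squeeze_zero (fun t => dist_nonneg) (fun t => ?_) hLs
      have : (L * r i - t) / L = r i - t / L := by field_simp
      rw [this]
      exact hf _ _
    -- triangle inequality bound
    have hconst : ∀ t : ℝ, |L * r i - r' i| ≤
        dist (f (γ i (t / L))) (f (γ (i + 1) ((L * r i - t) / L))) +
        dist (f (γ i (t / L))) (f (γ (i + 1) ((r' i - t) / L))) := by
      intro t
      have heq : dist (f (γ (i + 1) ((L * r i - t) / L)))
          (f (γ (i + 1) ((r' i - t) / L))) = |L * r i - r' i| := by
        rw [haff (i + 1)]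
        have : (L * r i - t) / L - (r' i - t) / L = (L * r i - r' i) / L := by ring
        rw [this, abs_div, abs_of_pos hL]
        field_simp
      calc |L * r i - r' i|
          = dist (f (γ (i + 1) ((L * r i - t) / L))) (f (γ (i + 1) ((r' i - t) / L))) :=
            heq.symm
        _ ≤ dist (f (γ (i + 1) ((L * r i - t) / L))) (f (γ i (t / L))) +
            dist (f (γ i (t / L))) (f (γ (i + 1) ((r' i - t) / L))) := dist_triangle _ _ _
        _ = _ := by rw [dist_comm]
    have hsum : Filter.Tendsto
        (fun t : ℝ => dist (f (γ i (t / L))) (f (γ (i + 1) ((L * r i - t) / L))) +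
          dist (f (γ i (t / L))) (f (γ (i + 1) ((r' i - t) / L))))
        Filter.atTop (nhds 0) := by
      simpa using h1.add (hsync' i)
    have hle : |L * r i - r' i| ≤ 0 :=
      le_of_tendsto_of_tendsto' tendsto_const_nhds hsum hconst
    have : L * r i - r' i = 0 := abs_eq_zero.mp (le_antisymm hle (abs_nonneg _))
    linarith
  rw [Finset.mul_sum]
  exact Finset.sum_congr rfl fun i _ => by rw [key i]; ring
end
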